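/- In the setting of the variation identity, let θ > 0 and suppose the new control ε' satisfies, for all t ∈ [0,T], the implicit update equation ε'(t) − ε(t) = (θ/β) · ( 2 Im⟨χ̃(t), μ̃ ψ̃'(t)⟩ − 2 Im⟨χ̂(t), μ̂ ψ̂'(t)⟩ − β (ε'(t) + ε(t)) ). Then J(ε') − J(ε) = ⟨δψ'(T) − δψ(T), O_{ψ₁}(δψ'(T) − δψ(T))⟩ + (β/θ) ∫₀ᵀ (ε'(t) − ε(t))² dt, and in particular J(ε') ≥ J(ε). -/

import Mathlib

noncomputable section

open Matrix

/-- `ψ` solves the bilinear Schrödinger equation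
`i ψ'(t) = (H + ε(t) μ) ψ(t)` on `[0, T]` with initial state `ψ₀`. -/
def IsSchrodSol {n : ℕ} (H μ : Matrix (Fin n) (Fin n) ℂ) (ε : ℝ → ℝ)
    (ψ₀ : EuclideanSpace ℂ (Fin n)) (T : ℝ) (ψ : ℝ → EuclideanSpace ℂ (Fin n)) : Prop :=
  ψ 0 = ψ₀ ∧ ∀ t ∈ Set.Icc (0 : ℝ) T,
    HasDerivAt ψ ((-Complex.I) • (Matrix.toEuclideanLin (H + (ε t : ℂ) • μ) (ψ t))) t

/-- `χ` solves the adjoint equation `i χ'(t) = (H + ε(t) μ) χ(t)` on `[0, T]`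
with terminal state `χ(T) = χT`. -/
def IsSchrodAdjSol {n : ℕ} (H μ : Matrix (Fin n) (Fin n) ℂ) (ε : ℝ → ℝ)
    (χT : EuclideanSpace ℂ (Fin n)) (T : ℝ) (χ : ℝ → EuclideanSpace ℂ (Fin n)) : Prop :=
  χ T = χT ∧ ∀ t ∈ Set.Icc (0 : ℝ) T,
    HasDerivAt χ ((-Complex.I) • (Matrix.toEuclideanLin (H + (ε t : ℂ) • μ) (χ t))) t

/-- The rank-one observable `O_{ψ₁} : x ↦ ⟨ψ₁, x⟩ ψ₁`. -/
def rankOne {n : ℕ} (ψ₁ x : EuclideanSpace ℂ (Fin n)) : EuclideanSpace ℂ (Fin n) :=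
  (inner ℂ ψ₁ x : ℂ) • ψ₁

/-- The selectivity functional
`J(ε) = ⟨ψ̃(T) − ψ̂(T), O_{ψ₁}(ψ̃(T) − ψ̂(T))⟩ − β ∫₀ᵀ ε(t)² dt`. -/
def Jfun {n : ℕ} (T β : ℝ) (ψ₁ : EuclideanSpace ℂ (Fin n)) (ε : ℝ → ℝ)
    (ψt ψh : ℝ → EuclideanSpace ℂ (Fin n)) : ℝ :=
  (inner ℂ (ψt T - ψh T) (rankOne ψ₁ (ψt T - ψh T)) : ℂ).re
    - β * ∫ t in (0:ℝ)..T, (ε t) ^ 2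

/-! Along the Schrödinger flow the Hermitian generators cancel in the derivative of
`t ↦ ⟨χ(t), ψ'(t) − ψ(t)⟩`, leaving only the control difference, so
`Re⟨χ(T), ψ'(T) − ψ(T)⟩ = ∫₀ᵀ (ε' − ε) Im⟨χ, μ ψ'⟩`. Expanding the quadratic form of `O_{ψ₁}`
around `δψ(T)`, `J(ε') − J(ε)` is its quadratic term at `δψ'(T) − δψ(T)` plus twice the linear
term `Re⟨O_{ψ₁} δψ(T), δψ'(T) − δψ(T)⟩` minus the change of the cost `β ∫ ε²`. The identity above
writes the linear term as an integral, and the implicit update equation turns it into exactly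
the change of cost plus `(β/θ) ∫ (ε' − ε)²`. -/

open Complex
open scoped InnerProductSpace

theorem hasDerivAt_inner_of_isSymmetric {E : Type*} [NormedAddCommGroup E] [InnerProductSpace ℂ E]
    {A : E →ₗ[ℂ] E} (hA : A.IsSymmetric) {χ u : ℝ → E} {v : E} {t : ℝ}
    (hχ : HasDerivAt χ (-I • A (χ t)) t) (hu : HasDerivAt u (-I • A (u t) + v) t) :
    HasDerivAt (fun s => ⟪χ s, u s⟫_ℂ) ⟪χ t, v⟫_ℂ t := by
  refine (hχ.inner ℂ hu).congr_deriv ?_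
  rw [inner_add_right, inner_smul_left, inner_smul_right, hA]
  simp

theorem Matrix.IsHermitian.add_ofReal_smul {n : Type*} [Fintype n] {H μ : Matrix n n ℂ}
    (hH : H.IsHermitian) (hμ : μ.IsHermitian) (r : ℝ) : (H + (r : ℂ) • μ).IsHermitian :=
  hH.add (hμ.smul (conj_ofReal r))

section Schrodinger

variable {n : ℕ} {H μ : Matrix (Fin n) (Fin n) ℂ} {ε ε' : ℝ → ℝ} {T : ℝ}
  {ψ₀ χT : EuclideanSpace ℂ (Fin n)} {ψ ψ' χ : ℝ → EuclideanSpace ℂ (Fin n)}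

theorem IsSchrodSol.continuousOn (h : IsSchrodSol H μ ε ψ₀ T ψ) :
    ContinuousOn ψ (Set.Icc 0 T) :=
  fun t ht => (h.2 t ht).continuousAt.continuousWithinAt

theorem IsSchrodAdjSol.continuousOn (h : IsSchrodAdjSol H μ ε χT T χ) :
    ContinuousOn χ (Set.Icc 0 T) :=
  fun t ht => (h.2 t ht).continuousAt.continuousWithinAt

theorem continuousOn_im_inner_toEuclideanLin {s : Set ℝ} (hχ : ContinuousOn χ s)
    (hψ : ContinuousOn ψ s) :
    ContinuousOn (fun t => (⟪χ t, toEuclideanLin μ (ψ t)⟫_ℂ).im) s :=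
  continuous_im.comp_continuousOn <|
    hχ.inner ((toEuclideanLin μ).continuous_of_finiteDimensional.comp_continuousOn hψ)

theorem toEuclideanLin_add_ofReal_smul (a b : ℝ) (x : EuclideanSpace ℂ (Fin n)) :
    toEuclideanLin (H + (a : ℂ) • μ) x
      = toEuclideanLin (H + (b : ℂ) • μ) x + ((a - b : ℝ) : ℂ) • toEuclideanLin μ x := by
  simp only [map_add, map_smul, LinearMap.add_apply, LinearMap.smul_apply, ofReal_sub, sub_smul]
  abel

theorem hasDerivAt_inner_adjSol_sub (hH : H.IsHermitian) (hμ : μ.IsHermitian)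
    {ψ₀' : EuclideanSpace ℂ (Fin n)} (hψ : IsSchrodSol H μ ε ψ₀ T ψ)
    (hψ' : IsSchrodSol H μ ε' ψ₀' T ψ') (hχ : IsSchrodAdjSol H μ ε χT T χ) {t : ℝ}
    (ht : t ∈ Set.Icc 0 T) :
    HasDerivAt (fun s => ⟪χ s, ψ' s - ψ s⟫_ℂ)
      (-I * (ε' t - ε t : ℝ) * ⟪χ t, toEuclideanLin μ (ψ' t)⟫_ℂ) t := by
  have hA := isSymmetric_toEuclideanLin_iff.mpr (hH.add_ofReal_smul hμ (ε t))
  have hdiff := (hψ'.2 t ht).sub (hψ.2 t ht)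
  rw [toEuclideanLin_add_ofReal_smul (ε' t) (ε t)] at hdiff
  refine (hasDerivAt_inner_of_isSymmetric hA (hχ.2 t ht)
    (v := (-I * (ε' t - ε t : ℝ)) • toEuclideanLin μ (ψ' t)) (hdiff.congr_deriv ?_)).congr_deriv ?_
  · rw [Pi.sub_apply, map_sub, smul_sub, smul_add, smul_smul]; abel
  · rw [inner_smul_right]

theorem re_inner_adjSol_sub_eq_integral (hT : 0 ≤ T) (hH : H.IsHermitian) (hμ : μ.IsHermitian)
    (hε : Continuous ε) (hε' : Continuous ε') (hψ : IsSchrodSol H μ ε ψ₀ T ψ)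
    (hψ' : IsSchrodSol H μ ε' ψ₀ T ψ') (hχ : IsSchrodAdjSol H μ ε χT T χ) :
    (⟪χ T, ψ' T - ψ T⟫_ℂ).re
      = ∫ t in (0 : ℝ)..T, (ε' t - ε t) * (⟪χ t, toEuclideanLin μ (ψ' t)⟫_ℂ).im := by
  have hderiv (t : ℝ) (ht : t ∈ Set.Icc 0 T) :
      HasDerivAt (fun s => (⟪χ s, ψ' s - ψ s⟫_ℂ).re)
        ((ε' t - ε t) * (⟪χ t, toEuclideanLin μ (ψ' t)⟫_ℂ).im) t := by
    refine (reCLM.hasFDerivAt.comp_hasDerivAt t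
      (hasDerivAt_inner_adjSol_sub hH hμ hψ hψ' hχ ht)).congr_deriv ?_
    simp
  rw [intervalIntegral.integral_eq_sub_of_hasDerivAt_of_le hT _
    fun t ht => hderiv t (Set.Ioo_subset_Icc_self ht)]
  · simp [hψ.1, hψ'.1]
  · apply ContinuousOn.intervalIntegrable_of_Icc hT
    exact (hε'.sub hε).continuousOn.mul
      (continuousOn_im_inner_toEuclideanLin hχ.continuousOn hψ'.continuousOn)
  · exact fun t ht => (hderiv t ht).continuousAt.continuousWithinAt

end Schrodinger

theorem re_inner_rankOne_self {n : ℕ} (ψ₁ x : EuclideanSpace ℂ (Fin n)) :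
    (⟪x, rankOne ψ₁ x⟫_ℂ).re = normSq ⟪ψ₁, x⟫_ℂ := by
  rw [rankOne, inner_smul_right, ← inner_conj_symm x ψ₁, mul_conj, ofReal_re]

theorem re_inner_rankOne_self_sub_self {n : ℕ} (ψ₁ a b : EuclideanSpace ℂ (Fin n)) :
    (⟪a, rankOne ψ₁ a⟫_ℂ).re - (⟪b, rankOne ψ₁ b⟫_ℂ).re
      = (⟪a - b, rankOne ψ₁ (a - b)⟫_ℂ).re + 2 * (⟪rankOne ψ₁ b, a - b⟫_ℂ).re := by
  simp only [re_inner_rankOne_self, normSq_apply, inner_sub_right, sub_re, sub_im]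
  simp only [rankOne, inner_smul_left, mul_re, conj_re, conj_im]
  ring

theorem integral_cost_of_implicit_update {T β θ : ℝ} (hT : 0 ≤ T) (hβ : β ≠ 0) (hθ : θ ≠ 0)
    {ε ε' f g : ℝ → ℝ} (hε : Continuous ε) (hε' : Continuous ε')
    (hf : ContinuousOn f (Set.Icc 0 T)) (hg : ContinuousOn g (Set.Icc 0 T))
    (hupdate : ∀ t ∈ Set.Icc 0 T,
      ε' t - ε t = θ / β * (2 * f t - 2 * g t - β * (ε' t + ε t))) :
    2 * (∫ t in (0 : ℝ)..T, (ε' t - ε t) * f t) - 2 * ∫ t in (0 : ℝ)..T, (ε' t - ε t) * g t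
      = β / θ * (∫ t in (0 : ℝ)..T, (ε' t - ε t) ^ 2)
        + β * (∫ t in (0 : ℝ)..T, ε' t ^ 2) - β * ∫ t in (0 : ℝ)..T, ε t ^ 2 := by
  have hpoint : ∀ t ∈ Set.uIcc 0 T,
      2 * ((ε' t - ε t) * f t) - 2 * ((ε' t - ε t) * g t)
        = β / θ * (ε' t - ε t) ^ 2 + β * ε' t ^ 2 - β * ε t ^ 2 := by
    intro t ht
    have h : β / θ * (ε' t - ε t) = 2 * f t - 2 * g t - β * (ε' t + ε t) := by
      rw [hupdate t (Set.uIcc_of_le hT ▸ ht)]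
      field_simp
    linear_combination (ε t - ε' t) * h
  have hint (h : ℝ → ℝ) (hh : ContinuousOn h (Set.Icc 0 T)) :
      IntervalIntegrable (fun t => (ε' t - ε t) * h t) MeasureTheory.volume 0 T :=
    ((hε'.sub hε).continuousOn.mul hh).intervalIntegrable_of_Icc hT
  rw [← intervalIntegral.integral_const_mul, ← intervalIntegral.integral_const_mul,
    ← intervalIntegral.integral_sub ((hint f hf).const_mul 2) ((hint g hg).const_mul 2),
    intervalIntegral.integral_congr hpoint, intervalIntegral.integral_sub,
    intervalIntegral.integral_add, intervalIntegral.integral_const_mul,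
    intervalIntegral.integral_const_mul, intervalIntegral.integral_const_mul]
  all_goals exact Continuous.intervalIntegrable (by fun_prop) _ _

theorem implicit_update_monotonic_general {n : ℕ} (T β θ : ℝ) (hT : 0 < T) (hβ : 0 < β)
    (hθ : 0 < θ)
    (H : Matrix (Fin n) (Fin n) ℂ) (hH : H.IsHermitian)
    (ψ₀ ψ₁ : EuclideanSpace ℂ (Fin n))
    (μt μh : Matrix (Fin n) (Fin n) ℂ) (hμt : μt.IsHermitian) (hμh : μh.IsHermitian)
    (ε ε' : ℝ → ℝ) (hε : Continuous ε) (hε' : Continuous ε')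
    (ψt ψh ψt' ψh' : ℝ → EuclideanSpace ℂ (Fin n))
    (hψt : IsSchrodSol H μt ε ψ₀ T ψt) (hψh : IsSchrodSol H μh ε ψ₀ T ψh)
    (hψt' : IsSchrodSol H μt ε' ψ₀ T ψt') (hψh' : IsSchrodSol H μh ε' ψ₀ T ψh')
    (χt χh : ℝ → EuclideanSpace ℂ (Fin n))
    (hχt : IsSchrodAdjSol H μt ε (rankOne ψ₁ (ψt T - ψh T)) T χt)
    (hχh : IsSchrodAdjSol H μh ε (rankOne ψ₁ (ψt T - ψh T)) T χh)
    (hupdate : ∀ t ∈ Set.Icc (0 : ℝ) T,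
      ε' t - ε t = (θ / β) *
          (2 * (inner ℂ (χt t) (Matrix.toEuclideanLin μt (ψt' t)) : ℂ).im
           - 2 * (inner ℂ (χh t) (Matrix.toEuclideanLin μh (ψh' t)) : ℂ).im
           - β * (ε' t + ε t))) :
    (Jfun T β ψ₁ ε' ψt' ψh' - Jfun T β ψ₁ ε ψt ψh =
      (inner ℂ ((ψt' T - ψh' T) - (ψt T - ψh T))
        (rankOne ψ₁ ((ψt' T - ψh' T) - (ψt T - ψh T))) : ℂ).re
      + (β / θ) * ∫ t in (0:ℝ)..T, (ε' t - ε t) ^ 2) ∧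
    Jfun T β ψ₁ ε ψt ψh ≤ Jfun T β ψ₁ ε' ψt' ψh' := by
  have hvar_t := re_inner_adjSol_sub_eq_integral hT.le hH hμt hε hε' hψt hψt' hχt
  have hvar_h := re_inner_adjSol_sub_eq_integral hT.le hH hμh hε hε' hψh hψh' hχh
  have hcost := integral_cost_of_implicit_update hT.le hβ.ne' hθ.ne' hε hε'
    (continuousOn_im_inner_toEuclideanLin hχt.continuousOn hψt'.continuousOn)
    (continuousOn_im_inner_toEuclideanLin hχh.continuousOn hψh'.continuousOn) hupdate
  have hcross : (⟪rankOne ψ₁ (ψt T - ψh T), (ψt' T - ψh' T) - (ψt T - ψh T)⟫_ℂ).re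
      = (⟪χt T, ψt' T - ψt T⟫_ℂ).re - (⟪χh T, ψh' T - ψh T⟫_ℂ).re := by
    rw [hχt.1, hχh.1, ← sub_re, ← inner_sub_right, sub_sub_sub_comm]
  have hJ : Jfun T β ψ₁ ε' ψt' ψh' - Jfun T β ψ₁ ε ψt ψh =
      (⟪(ψt' T - ψh' T) - (ψt T - ψh T), rankOne ψ₁ ((ψt' T - ψh' T) - (ψt T - ψh T))⟫_ℂ).re
        + β / θ * ∫ t in (0 : ℝ)..T, (ε' t - ε t) ^ 2 := by
    have hpolar := re_inner_rankOne_self_sub_self ψ₁ (ψt' T - ψh' T) (ψt T - ψh T)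
    unfold Jfun
    linarith
  refine ⟨hJ, sub_nonneg.mp (hJ ▸ add_nonneg ?_ ?_)⟩
  · exact re_inner_rankOne_self ψ₁ _ ▸ normSq_nonneg _
  · exact mul_nonneg (div_nonneg hβ.le hθ.le)
      (intervalIntegral.integral_nonneg hT.le fun t _ => sq_nonneg _)

/-- if the new control `ε'` satisfies the implicit update equation
`ε'(t) − ε(t) = (θ/β)(2 Im⟨χ̃,μ̃ψ̃'⟩ − 2 Im⟨χ̂,μ̂ψ̂'⟩ − β(ε'(t)+ε(t)))` on `[0,T]`,
then `J(ε') − J(ε) = ⟨δψ'(T)−δψ(T), O(δψ'(T)−δψ(T))⟩ + (β/θ)∫₀ᵀ(ε'−ε)²`, and in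
particular `J(ε') ≥ J(ε)`. -/
theorem implicit_update_monotonic {n : ℕ} (T β θ : ℝ) (hT : 0 < T) (hβ : 0 < β)
    (hθ : 0 < θ)
    (H : Matrix (Fin n) (Fin n) ℂ) (hH : H.IsHermitian)
    (ψ₀ ψ₁ : EuclideanSpace ℂ (Fin n)) (hψ₀ : ‖ψ₀‖ = 1) (hψ₁ : ‖ψ₁‖ = 1)
    (μt μh : Matrix (Fin n) (Fin n) ℂ) (hμt : μt.IsHermitian) (hμh : μh.IsHermitian)
    (ε ε' : ℝ → ℝ) (hε : Continuous ε) (hε' : Continuous ε')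
    (ψt ψh ψt' ψh' : ℝ → EuclideanSpace ℂ (Fin n))
    (hψt : IsSchrodSol H μt ε ψ₀ T ψt) (hψh : IsSchrodSol H μh ε ψ₀ T ψh)
    (hψt' : IsSchrodSol H μt ε' ψ₀ T ψt') (hψh' : IsSchrodSol H μh ε' ψ₀ T ψh')
    (χt χh : ℝ → EuclideanSpace ℂ (Fin n))
    (hχt : IsSchrodAdjSol H μt ε (rankOne ψ₁ (ψt T - ψh T)) T χt)
    (hχh : IsSchrodAdjSol H μh ε (rankOne ψ₁ (ψt T - ψh T)) T χh)
    (hupdate : ∀ t ∈ Set.Icc (0 : ℝ) T,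
      ε' t - ε t = (θ / β) *
          (2 * (inner ℂ (χt t) (Matrix.toEuclideanLin μt (ψt' t)) : ℂ).im
           - 2 * (inner ℂ (χh t) (Matrix.toEuclideanLin μh (ψh' t)) : ℂ).im
           - β * (ε' t + ε t))) :
    (Jfun T β ψ₁ ε' ψt' ψh' - Jfun T β ψ₁ ε ψt ψh =
      (inner ℂ ((ψt' T - ψh' T) - (ψt T - ψh T))
        (rankOne ψ₁ ((ψt' T - ψh' T) - (ψt T - ψh T))) : ℂ).re
      + (β / θ) * ∫ t in (0:ℝ)..T, (ε' t - ε t) ^ 2) ∧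
    Jfun T β ψ₁ ε ψt ψh ≤ Jfun T β ψ₁ ε' ψt' ψh' :=
  implicit_update_monotonic_general T β θ hT hβ hθ H hH ψ₀ ψ₁ μt μh hμt hμh ε ε' hε hε' ψt ψh ψt'
    ψh' hψt hψh hψt' hψh' χt χh hχt hχh hupdate
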